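/- Let F be a field, n ≥ 2, and T_n the ring of lower triangular n×n matrices over F. If a pair (A,B) ∈ ²T_n generates a free cyclic submodule T_n(A,B), then (A,B) is either unimodular or an outlier; that is, every free cyclic submodule of ²T_n is generated by a unimodular pair or by an outlier. -/

import Mathlib

/-- The subring `T_n` of lower triangular `n × n` matrices over a field `F`:
matrices `A` with `A i j = 0` whenever `i < j`. -/
def Tri (F : Type*) [Field F] (n : ℕ) : Subring (Matrix (Fin n) (Fin n) F) where
  carrier := {A | ∀ i j : Fin n, i < j → A i j = 0}
  zero_mem' := fun i j _ => rfl
  one_mem' := fun i j hij => Matrix.one_apply_ne (ne_of_lt hij)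
  add_mem' := fun {a b} ha hb i j hij => by
    simp [Matrix.add_apply, ha i j hij, hb i j hij]
  neg_mem' := fun {a} ha i j hij => by
    simp [Matrix.neg_apply, ha i j hij]
  mul_mem' := fun {a b} ha hb i j hij => by
    rw [Matrix.mul_apply]
    apply Finset.sum_eq_zero
    intro k _
    rcases lt_or_ge i k with h | h
    · rw [ha i k h, zero_mul]
    · rw [hb k j (lt_of_le_of_lt h hij), mul_zero]

/-- The cyclic left submodule `T_n(A,B) = {(RA, RB) : R ∈ T_n}` of `²T_n`. -/
def cyc {F : Type*} [Field F] {n : ℕ} (A B : Tri F n) : Set (Tri F n × Tri F n) :=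
  {p | ∃ R : Tri F n, p = (R * A, R * B)}

/-- A pair `(A,B) ∈ ²T_n` is unimodular if there are `X, Y ∈ T_n` with `AX + BY`
a unit of `T_n`. -/
def Unimodular {F : Type*} [Field F] {n : ℕ} (A B : Tri F n) : Prop :=
  ∃ X Y : Tri F n, IsUnit (A * X + B * Y)

/-- A pair `(A,B) ∈ ²T_n` is an outlier if it belongs to no cyclic submodule generated by
a unimodular pair. -/
def Outlier {F : Type*} [Field F] {n : ℕ} (A B : Tri F n) : Prop :=
  ¬ ∃ C D : Tri F n, Unimodular C D ∧ (A, B) ∈ cyc C D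

/-
A pair lying in a cyclic submodule generated by a unimodular pair has the form `(RC, RD)` with
`CX + DY` a unit. If `(RC, RD)` generates a free submodule, then `SR = 0` forces `S = 0`, so `R`
is right regular in `T_n`. As a finite-dimensional `F`-algebra, `T_n` is Artinian, and in an
Artinian ring right regular elements are units. Hence `RCX + RDY = R(CX + DY)` is a unit.
-/

theorem isRightRegular_of_free_mul {α : Type*} [NonUnitalRing α] {r c d : α}
    (hfree : ∀ s : α, s * (r * c) = 0 → s * (r * d) = 0 → s = 0) : IsRightRegular r :=
  isRightRegular_iff_left_eq_zero_of_mul.2 fun s hs =>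
    hfree s (by rw [← mul_assoc, hs, zero_mul]) (by rw [← mul_assoc, hs, zero_mul])

namespace Tri

variable (F : Type*) [Field F] (n : ℕ)

def toSubalgebra : Subalgebra F (Matrix (Fin n) (Fin n) F) :=
  { Tri F n with
    algebraMap_mem' := fun _ _ _ hij => Matrix.algebraMap_matrix_apply.trans (if_neg hij.ne) }

instance : IsArtinianRing (Tri F n) :=
  have : IsArtinianRing (toSubalgebra F n) := isArtinian_of_tower F inferInstance
  inferInstanceAs (IsArtinianRing (toSubalgebra F n))

end Tri

theorem Unimodular.mul_left {F : Type*} [Field F] {n : ℕ} {C D : Tri F n} (h : Unimodular C D)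
    {R : Tri F n} (hR : IsUnit R) : Unimodular (R * C) (R * D) := by
  obtain ⟨X, Y, hXY⟩ := h
  exact ⟨X, Y, by simpa only [mul_assoc, ← mul_add] using hR.mul hXY⟩

theorem free_pair_unimodular_or_outlier_general
    {F : Type*} [Field F] {n : ℕ} (A B : Tri F n)
    (hfree : ∀ R : Tri F n, R * A = 0 → R * B = 0 → R = 0) :
    Unimodular A B ∨ Outlier A B := by
  refine or_iff_not_imp_right.2 fun hout => ?_
  obtain ⟨C, D, hCD, R, hR⟩ := not_not.1 hout
  obtain ⟨rfl, rfl⟩ := Prod.ext_iff.1 hR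
  have hR : IsUnit R := IsArtinianRing.isUnit_iff_isRightRegular.2 (isRightRegular_of_free_mul hfree)
  exact hCD.mul_left hR

/-- If a pair `(A,B) ∈ ²T_n` (`n ≥ 2`) generates a free cyclic
submodule `T_n(A,B)`, then `(A,B)` is either unimodular or an outlier; that is, every
free cyclic submodule of `²T_n` is generated by a unimodular pair or by an outlier. -/
theorem free_pair_unimodular_or_outlier
    {F : Type*} [Field F] {n : ℕ} (hn : 2 ≤ n) (A B : Tri F n)
    (hfree : ∀ R : Tri F n, R * A = 0 → R * B = 0 → R = 0) :
    Unimodular A B ∨ Outlier A B :=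
  free_pair_unimodular_or_outlier_general A B hfree
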